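/- arXiv:2012.14992 — 2 statements merged into one kernel-verified Lean document; each statement's English description precedes it below -/
import Mathlib

section
/- Let G be a graph with no cycle of length 3 and no cycle of length 5, let F_1, …, F_n be matchings of size n in G, and let R be a rainbow matching of maximum size q. For e ∈ R let HW(e) be the set of unrepresented matchings F_i for which e is half-F_i-wasteful. Then Σ_{e ∈ R} |HW(e)| ≤ 2q. -/
/-!
Let `{e, f}` be half-`F k`-wasteful. Then `e` and `f` each carry an `F k`-edge to a vertex missed
by `R`, and an `F k`-edge joins their other ends. If moreover `e` were half-`F i`-wasteful and `f`
half-`F j`-wasteful, with `i, j, k` distinct, these pendant edges could be traded for `e` or `f`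
(or both) to give a larger rainbow matching; the absence of triangles and pentagons keeps the
traded edges disjoint. Consequently, when `|HW(e)| ≥ 3`, every `k ∈ HW(e)` has a partner `f` with
`HW(f) = {k}`; different colours have different partners, and different such `e` have different
partners. Moving one unit from `e` to each of its partners leaves every edge of `R` with at most
`2`.
-/

/-- Two graph edges intersect (share a vertex). -/
def Meets {V : Type*} (e f : Sym2 V) : Prop := ∃ v, v ∈ e ∧ v ∈ f

/-- `g` intersects `e` and no other edge of the matching `R`. -/
def MeetsOnly {V : Type*} (R : Finset (Sym2 V)) (g e : Sym2 V) : Prop :=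
  Meets g e ∧ ∀ f ∈ R, f ≠ e → ¬ Meets g f

/-- The pair `{e, f}` of edges of `R` is half-`A`-wasteful: there are edges
`g_e, g_f, g_{ef} ∈ A` such that `g_e` intersects `e` and no other edge of `R`, `g_f`
intersects `f` and no other edge of `R`, and `g_{ef}` intersects both `e` and `f`. -/
def HalfWastefulPair {V : Type*} (R A : Finset (Sym2 V)) (e f : Sym2 V) : Prop :=
  ∃ ge ∈ A, ∃ gf ∈ A, ∃ gef ∈ A,
    MeetsOnly R ge e ∧ MeetsOnly R gf f ∧ Meets gef e ∧ Meets gef f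

/-- The edge `e ∈ R` is half-`A`-wasteful: some pair `{e, f}` with `f ∈ R` is
half-`A`-wasteful. -/
def HalfWasteful {V : Type*} (R A : Finset (Sym2 V)) (e : Sym2 V) : Prop :=
  ∃ f ∈ R, f ≠ e ∧ HalfWastefulPair R A e f

/-- The number of unrepresented matchings `F i` (i.e. `i ∉ I`) for which `e` is
half-`F i`-wasteful. -/
noncomputable def hwDeg {V : Type*} {n : ℕ} (F : Fin n → Finset (Sym2 V))
    (I : Finset (Fin n)) (R : Finset (Sym2 V)) (e : Sym2 V) : ℕ :=
  {i : Fin n | i ∉ I ∧ HalfWasteful R (F i) e}.ncard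

section

variable {V : Type*}

theorem Meets.symm {e f : Sym2 V} (h : Meets e f) : Meets f e :=
  let ⟨v, he, hf⟩ := h; ⟨v, hf, he⟩

theorem meets_mk_mk {a b c d : V} : Meets s(a, b) s(c, d) ↔ a = c ∨ a = d ∨ b = c ∨ b = d := by
  simp only [Meets, Sym2.mem_iff]
  aesop

theorem Sym2.false_of_three_mem {z : Sym2 V} {a b c : V} (hab : a ≠ b) (hac : a ≠ c) (hbc : b ≠ c)
    (ha : a ∈ z) (hb : b ∈ z) (hc : c ∈ z) : False := by
  induction z using Sym2.ind with
  | _ x y =>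
    simp only [Sym2.mem_iff] at ha hb hc
    grind

namespace SimpleGraph

variable {G : SimpleGraph V}

theorem false_of_triangle (h3 : ∀ (v : V) (w : G.Walk v v), w.IsCycle → w.length ≠ 3)
    {a b c : V} (hab : G.Adj a b) (hbc : G.Adj b c) (hca : G.Adj c a) : False := by
  classical
  obtain ⟨u, w, hw, hlen⟩ := is3Clique_iff_exists_cycle_length_three.1
    ⟨{a, b, c}, is3Clique_triple_iff.2 ⟨hab, hca.symm, hbc⟩⟩
  exact h3 u w hw hlen

theorem false_of_pentagon (h5 : ∀ (v : V) (w : G.Walk v v), w.IsCycle → w.length ≠ 5)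
    {a b c d e : V} (hab : G.Adj a b) (hbc : G.Adj b c) (hcd : G.Adj c d) (hde : G.Adj d e)
    (hea : G.Adj e a) (hac : a ≠ c) (had : a ≠ d) (hbd : b ≠ d) (hbe : b ≠ e) (hce : c ≠ e) :
    False := by
  refine h5 a (.cons hab (.cons hbc (.cons hcd (.cons hde (.cons hea .nil))))) ?_ rfl
  have := hab.ne; have := hbc.ne; have := hcd.ne; have := hde.ne; have := hea.ne
  simp only [Walk.cons_isCycle_iff, Walk.cons_isPath_iff, Walk.support_cons, Walk.edges_cons]
  grind [Walk.isPath_iff_nil, Walk.support_nil, Walk.edges_nil, Sym2.eq_iff]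

end SimpleGraph

open Finset

theorem sum_le_two_mul_card_of_discharging {α : Type*} [DecidableEq α] {R : Finset α}
    {w : α → ℕ} {N : α → Finset α}
    (hN : ∀ e ∈ R, 2 < w e → N e ⊆ R ∧ w e ≤ #(N e) ∧ ∀ g ∈ N e, w g ≤ 1)
    (hdisj : ∀ e ∈ R, ∀ e' ∈ R, 2 < w e → 2 < w e' → e ≠ e' → Disjoint (N e) (N e')) :
    ∑ e ∈ R, w e ≤ 2 * #R := by
  set B := {e ∈ R | 2 < w e}
  set M := B.biUnion N
  have hB : ∀ e ∈ B, e ∈ R ∧ 2 < w e := fun e he => mem_filter.1 he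
  have hM : ∀ g ∈ M, g ∈ R ∧ w g ≤ 1 := by
    intro g hg
    obtain ⟨e, he, hge⟩ := mem_biUnion.1 hg
    have := hN e (hB e he).1 (hB e he).2
    exact ⟨this.1 hge, this.2.2 g hge⟩
  have hBM : Disjoint B M :=
    disjoint_left.2 fun g hgB hgM => by have := (hB g hgB).2; have := (hM g hgM).2; omega
  have hBMR : B ∪ M ⊆ R := union_subset (filter_subset _ _) fun g hg => (hM g hg).1
  have hsumB : ∑ e ∈ B, w e ≤ #M := by
    rw [card_biUnion fun e he e' he' hne =>
      hdisj e (hB e he).1 e' (hB e' he').1 (hB e he).2 (hB e' he').2 hne]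
    exact sum_le_sum fun e he => (hN e (hB e he).1 (hB e he).2).2.1
  have hsumM : ∑ e ∈ M, w e ≤ #M := by
    simpa using sum_le_card_nsmul M w 1 fun g hg => (hM g hg).2
  have hsumRest : ∑ e ∈ R \ (B ∪ M), w e ≤ 2 * #(R \ (B ∪ M)) := by
    rw [mul_comm]
    refine sum_le_card_nsmul _ w 2 fun e he => ?_
    obtain ⟨heR, heBM⟩ := mem_sdiff.1 he
    by_contra! h
    exact heBM (mem_union_left _ (mem_filter.2 ⟨heR, h⟩))
  have hcard := card_sdiff_add_card_eq_card hBMR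
  rw [← sum_sdiff hBMR, sum_union hBM, ← hcard, card_union_of_disjoint hBM]
  omega

def IsMatching (M : Finset (Sym2 V)) : Prop :=
  (M : Set (Sym2 V)).Pairwise fun e f => ¬Meets e f

variable {n : ℕ}

def IsRainbowMatching (F : Fin n → Finset (Sym2 V)) (J : Finset (Fin n)) (d : Fin n → Sym2 V) :
    Prop :=
  (∀ i ∈ J, d i ∈ F i) ∧ (J : Set (Fin n)).Pairwise fun i j => ¬Meets (d i) (d j)

def IsMaximumRainbowMatching (F : Fin n → Finset (Sym2 V)) (I : Finset (Fin n))
    (c : Fin n → Sym2 V) : Prop :=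
  IsRainbowMatching F I c ∧ ∀ J d, IsRainbowMatching F J d → #J ≤ #I

theorem IsMatching.false_of_three_meets {M : Finset (Sym2 V)} (hM : IsMatching M)
    {g₁ g₂ g₃ e : Sym2 V} (h₁ : g₁ ∈ M) (h₂ : g₂ ∈ M) (h₃ : g₃ ∈ M) (h₁₂ : g₁ ≠ g₂)
    (h₁₃ : g₁ ≠ g₃) (h₂₃ : g₂ ≠ g₃) (m₁ : Meets g₁ e) (m₂ : Meets g₂ e) (m₃ : Meets g₃ e) :
    False := by
  obtain ⟨v₁, hv₁, hv₁e⟩ := m₁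
  obtain ⟨v₂, hv₂, hv₂e⟩ := m₂
  obtain ⟨v₃, hv₃, hv₃e⟩ := m₃
  refine Sym2.false_of_three_mem ?_ ?_ ?_ hv₁e hv₂e hv₃e
  · rintro rfl; exact hM h₁ h₂ h₁₂ ⟨v₁, hv₁, hv₂⟩
  · rintro rfl; exact hM h₁ h₃ h₁₃ ⟨v₁, hv₁, hv₃⟩
  · rintro rfl; exact hM h₂ h₃ h₂₃ ⟨v₂, hv₂, hv₃⟩

namespace IsRainbowMatching

variable {F : Fin n → Finset (Sym2 V)} {I J K : Finset (Fin n)} {c d : Fin n → Sym2 V}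

theorem not_meets (h : IsRainbowMatching F I c) {i j : Fin n} (hi : i ∈ I) (hj : j ∈ I)
    (hij : i ≠ j) : ¬Meets (c i) (c j) :=
  h.2 hi hj hij

theorem mono (h : IsRainbowMatching F J d) (hKJ : K ⊆ J) : IsRainbowMatching F K d :=
  ⟨fun i hi => h.1 i (hKJ hi), h.2.mono (coe_subset.2 hKJ)⟩

theorem union (hc : IsRainbowMatching F J c) (hd : IsRainbowMatching F K d) (hJK : Disjoint J K)
    (hcd : ∀ i ∈ K, ∀ j ∈ J, ¬Meets (d i) (c j)) :
    IsRainbowMatching F (J ∪ K) (K.piecewise d c) := by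
  have hJ : ∀ i ∈ J, K.piecewise d c i = c i := fun i hi =>
    piecewise_eq_of_notMem _ _ _ (disjoint_left.1 hJK hi)
  have hK : ∀ i ∈ K, K.piecewise d c i = d i := fun i hi => piecewise_eq_of_mem _ _ _ hi
  refine ⟨fun i hi => ?_, ?_⟩
  · rcases mem_union.1 hi with hi | hi
    · exact hJ i hi ▸ hc.1 i hi
    · exact hK i hi ▸ hd.1 i hi
  · rw [coe_union, Set.pairwise_union]
    refine ⟨fun i hi j hj hij => ?_, fun i hi j hj hij => ?_, fun i hi j hj _ => ?_⟩
    · simpa only [hJ i hi, hJ j hj] using hc.2 hi hj hij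
    · simpa only [hK i hi, hK j hj] using hd.2 hi hj hij
    · rw [hJ i hi, hK j hj]; exact ⟨fun h => hcd j hj i hi h.symm, hcd j hj i hi⟩

theorem not_meets_of_mem_of_uncovered (h : IsRainbowMatching F I c) {a j : Fin n} (ha : a ∈ I)
    (hj : j ∈ I) (hja : j ≠ a) {u x : V} (hu : u ∈ c a) (hx : ∀ k ∈ I, x ∉ c k) :
    ¬Meets s(u, x) (c j) := by
  rintro ⟨v, hv, hvj⟩
  rcases Sym2.mem_iff.1 hv with rfl | rfl
  · exact h.not_meets ha hj hja.symm ⟨v, hu, hvj⟩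
  · exact hx j hj hvj

theorem injOn (h : IsRainbowMatching F J d) : Set.InjOn d J := by
  intro i hi j hj hij
  by_contra hne
  obtain ⟨v, hv⟩ : ∃ v, v ∈ d i := ⟨_, (d i).out_fst_mem⟩
  exact h.not_meets hi hj hne ⟨v, hv, hij ▸ hv⟩

theorem isMatching_image [DecidableEq V] (h : IsRainbowMatching F J d) :
    IsMatching (J.image d) := by
  rintro _ he _ hf hne
  obtain ⟨i, hi, rfl⟩ := mem_image.1 he
  obtain ⟨j, hj, rfl⟩ := mem_image.1 hf
  exact h.not_meets hi hj fun hij => hne (hij ▸ rfl)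

theorem pair {i j : Fin n} {g g' : Sym2 V} (hij : i ≠ j) (hg : g ∈ F i) (hg' : g' ∈ F j)
    (h : ¬Meets g g') : IsRainbowMatching F {i, j} fun l => if l = i then g else g' := by
  refine ⟨by simp [hg, hg', hij.symm], ?_⟩
  rw [coe_pair, Set.pairwise_pair]
  simpa [hij.symm] using fun _ => ⟨h, mt Meets.symm h⟩

theorem triple {i j k : Fin n} {g g' g'' : Sym2 V} (hij : i ≠ j) (hik : i ≠ k) (hjk : j ≠ k)
    (hg : g ∈ F i) (hg' : g' ∈ F j) (hg'' : g'' ∈ F k)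
    (h' : ¬Meets g g') (h'' : ¬Meets g g'') (h''' : ¬Meets g' g'') :
    IsRainbowMatching F {i, j, k} fun l => if l = i then g else if l = j then g' else g'' := by
  refine ⟨by simp [hg, hg', hg'', hij.symm, hik.symm, hjk.symm], ?_⟩
  rw [coe_insert, coe_pair, Set.pairwise_insert, Set.pairwise_pair]
  simp only [Set.mem_insert_iff, Set.mem_singleton_iff, forall_eq_or_imp, forall_eq, if_pos,
    if_neg hij.symm, if_neg hik.symm, if_neg hjk.symm]
  exact ⟨fun _ => ⟨h''', mt Meets.symm h'''⟩, fun _ => ⟨h', mt Meets.symm h'⟩,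
    fun _ => ⟨h'', mt Meets.symm h''⟩⟩

end IsRainbowMatching

namespace IsMaximumRainbowMatching

variable {F : Fin n → Finset (Sym2 V)} {I S T : Finset (Fin n)} {c d : Fin n → Sym2 V}

theorem card_le_of_exchange (h : IsMaximumRainbowMatching F I c) (hS : S ⊆ I)
    (hT : Disjoint I T) (hd : IsRainbowMatching F T d)
    (hdc : ∀ i ∈ T, ∀ j ∈ I \ S, ¬Meets (d i) (c j)) : #T ≤ #S := by
  have hJ := (h.1.mono sdiff_subset).union hd (hT.mono_left sdiff_subset) hdc
  have := h.2 _ _ hJ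
  rw [card_union_of_disjoint (hT.mono_left sdiff_subset), card_sdiff_of_subset hS] at this
  have := card_le_card hS
  omega

theorem false_of_pendants_at_both_ends (h : IsMaximumRainbowMatching F I c) {a : Fin n}
    (ha : a ∈ I) {u v x y : V} (hca : c a = s(u, v)) (huv : u ≠ v)
    (hx : ∀ k ∈ I, x ∉ c k) (hy : ∀ k ∈ I, y ∉ c k) (hxy : x ≠ y) {i j : Fin n} (hi : i ∉ I)
    (hj : j ∉ I) (hij : i ≠ j) (hui : s(u, x) ∈ F i) (hvj : s(v, y) ∈ F j) : False := by
  have hx' := hx a ha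
  have hy' := hy a ha
  rw [hca, Sym2.mem_iff] at hx' hy'
  have hnew := IsRainbowMatching.pair hij hui hvj (by rw [meets_mk_mk]; grind)
  have hu : u ∈ c a := hca ▸ Sym2.mem_mk_left u v
  have hv : v ∈ c a := hca ▸ Sym2.mem_mk_right u v
  have := h.card_le_of_exchange (singleton_subset_iff.2 ha) (by simp [hi, hj]) hnew
    fun l hl k hk => by
      obtain ⟨hkI, hka⟩ := mem_sdiff.1 hk
      simp only [mem_insert, mem_singleton] at hka hl
      rcases hl with rfl | rfl
      · simpa using h.1.not_meets_of_mem_of_uncovered ha hkI hka hu hx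
      · simpa [hij.symm] using h.1.not_meets_of_mem_of_uncovered ha hkI hka hv hy
  rw [card_pair hij, card_singleton] at this
  omega

theorem false_of_pendants_and_bridge (h : IsMaximumRainbowMatching F I c) {a b : Fin n}
    (ha : a ∈ I) (hb : b ∈ I) (hab : a ≠ b) {u p w r x y : V} (hca : c a = s(u, p))
    (hcb : c b = s(w, r)) (hup : u ≠ p) (hwr : w ≠ r)
    (hx : ∀ k ∈ I, x ∉ c k) (hy : ∀ k ∈ I, y ∉ c k) (hxy : x ≠ y) {i j k : Fin n} (hi : i ∉ I)
    (hj : j ∉ I) (hk : k ∉ I) (hij : i ≠ j) (hik : i ≠ k) (hjk : j ≠ k)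
    (hux : s(u, x) ∈ F i) (hwy : s(w, y) ∈ F j) (hpr : s(p, r) ∈ F k) : False := by
  have hx' := And.intro (hx a ha) (hx b hb)
  have hy' := And.intro (hy a ha) (hy b hb)
  have hab' := h.1.not_meets ha hb hab
  rw [hca, hcb, Sym2.mem_iff, Sym2.mem_iff] at hx' hy'
  rw [hca, hcb, meets_mk_mk] at hab'
  have hnew := IsRainbowMatching.triple hij hik hjk hux hwy hpr
    (by rw [meets_mk_mk]; grind) (by rw [meets_mk_mk]; grind) (by rw [meets_mk_mk]; grind)
  have hu : u ∈ c a := hca ▸ Sym2.mem_mk_left u p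
  have hp : p ∈ c a := hca ▸ Sym2.mem_mk_right u p
  have hw : w ∈ c b := hcb ▸ Sym2.mem_mk_left w r
  have hr : r ∈ c b := hcb ▸ Sym2.mem_mk_right w r
  have := h.card_le_of_exchange (insert_subset ha (singleton_subset_iff.2 hb))
    (by simp [hi, hj, hk]) hnew fun l hl m hm => by
      obtain ⟨hmI, hmab⟩ := mem_sdiff.1 hm
      simp only [mem_insert, mem_singleton, not_or] at hmab hl
      rcases hl with rfl | rfl | rfl
      · simpa using h.1.not_meets_of_mem_of_uncovered ha hmI hmab.1 hu hx
      · simpa [hij.symm] using h.1.not_meets_of_mem_of_uncovered hb hmI hmab.2 hw hy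
      · simp only [if_neg hik.symm, if_neg hjk.symm]
        rintro ⟨v, hv, hvm⟩
        rcases Sym2.mem_iff.1 hv with rfl | rfl
        · exact h.1.not_meets ha hmI (Ne.symm hmab.1) ⟨v, hp, hvm⟩
        · exact h.1.not_meets hb hmI (Ne.symm hmab.2) ⟨v, hr, hvm⟩
  rw [card_insert_of_notMem (by simp [hij, hik]), card_pair hjk,
    card_insert_of_notMem (by simpa using hab), card_singleton] at this
  omega

end IsMaximumRainbowMatching

section HalfWasteful

variable {R A : Finset (Sym2 V)} {e f : Sym2 V}

theorem HalfWastefulPair.symm (h : HalfWastefulPair R A e f) : HalfWastefulPair R A f e :=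
  let ⟨ge, hge, gf, hgf, gef, hgef, hoe, hof, hme, hmf⟩ := h
  ⟨gf, hgf, ge, hge, gef, hgef, hof, hoe, hmf, hme⟩

theorem MeetsOnly.ne_of_meets {g g' : Sym2 V} (hg : MeetsOnly R g e) (hf : f ∈ R) (hfe : f ≠ e)
    (hg'f : Meets g' f) : g ≠ g' := by
  rintro rfl
  exact hg.2 f hf hfe hg'f

theorem MeetsOnly.exists_pendant (hA : IsMatching A) {g g' : Sym2 V} (hg : g ∈ A)
    (hg' : g' ∈ A) (hgd : ¬g.IsDiag) (hge : MeetsOnly R g e) (hf : f ∈ R) (hfe : f ≠ e)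
    (hg'e : Meets g' e) (hg'f : Meets g' f) :
    ∃ a p x, e = s(a, p) ∧ g = s(a, x) ∧ p ∈ g' ∧ ∀ h ∈ R, x ∉ h := by
  have hgg' := hge.ne_of_meets hf hfe hg'f
  obtain ⟨p, hpg', hpe⟩ := hg'e
  obtain ⟨a, hag, hae⟩ := hge.1
  have hpg : p ∉ g := fun hpg => hA hg hg' hgg' ⟨p, hpg, hpg'⟩
  have hap : a ≠ p := by rintro rfl; exact hpg hag
  have hep := (Sym2.mem_and_mem_iff hap).1 ⟨hae, hpe⟩
  obtain ⟨x, rfl⟩ := Sym2.mem_iff_exists.1 hag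
  refine ⟨a, p, x, hep, rfl, hpg', fun h hh hxh => ?_⟩
  by_cases hhe : h = e
  · rw [hhe, hep] at hxh
    rcases Sym2.mem_iff.1 hxh with rfl | rfl
    · exact hgd (Sym2.mk_isDiag_iff.2 rfl)
    · exact hpg (Sym2.mem_mk_right _ _)
  · exact hge.2 h hh hhe ⟨x, Sym2.mem_mk_right a x, hxh⟩

theorem HalfWasteful.exists_pendant (hA : IsMatching A) (hAd : ∀ g ∈ A, ¬g.IsDiag)
    (h : HalfWasteful R A e) : ∃ a x, a ∈ e ∧ s(a, x) ∈ A ∧ ∀ h ∈ R, x ∉ h := by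
  obtain ⟨f, hf, hfe, ge, hge, -, -, gef, hgef, hoe, -, hme, hmf⟩ := h
  obtain ⟨a, p, x, rfl, rfl, -, hx⟩ :=
    hoe.exists_pendant hA hge hgef (hAd _ hge) hf hfe hme hmf
  exact ⟨a, x, Sym2.mem_mk_left a p, hge, hx⟩

theorem HalfWastefulPair.exists_pendants (hA : IsMatching A) (hAd : ∀ g ∈ A, ¬g.IsDiag)
    (hR : IsMatching R) (he : e ∈ R) (hf : f ∈ R) (hef : e ≠ f)
    (h : HalfWastefulPair R A e f) :
    ∃ v p x w r y, e = s(v, p) ∧ f = s(w, r) ∧ s(v, x) ∈ A ∧ s(w, y) ∈ A ∧ s(p, r) ∈ A ∧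
      (∀ h ∈ R, x ∉ h) ∧ (∀ h ∈ R, y ∉ h) := by
  obtain ⟨ge, hge, gf, hgf, gef, hgef, hoe, hof, hme, hmf⟩ := h
  obtain ⟨v, p, x, rfl, rfl, hp, hx⟩ :=
    hoe.exists_pendant hA hge hgef (hAd _ hge) hf hef.symm hme hmf
  obtain ⟨w, r, y, rfl, rfl, hr, hy⟩ :=
    hof.exists_pendant hA hgf hgef (hAd _ hgf) he hef hmf hme
  have hpr : p ≠ r := by
    rintro rfl
    exact hR he hf hef ⟨p, Sym2.mem_mk_right v p, Sym2.mem_mk_right w p⟩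
  rw [(Sym2.mem_and_mem_iff hpr).1 ⟨hp, hr⟩] at hgef
  exact ⟨v, p, x, w, r, y, rfl, rfl, hge, hgf, hgef, hx, hy⟩

theorem HalfWastefulPair.eq_of_halfWastefulPair (hA : IsMatching A) (hR : IsMatching R)
    {f' : Sym2 V} (he : e ∈ R) (hf : f ∈ R) (hf' : f' ∈ R) (hfe : f ≠ e) (hf'e : f' ≠ e)
    (h : HalfWastefulPair R A e f) (h' : HalfWastefulPair R A e f') : f = f' := by
  by_contra hff'
  obtain ⟨ge, hge, -, -, gef, hgef, hoe, -, hme, hmf⟩ := h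
  obtain ⟨-, -, -, -, gef', hgef', -, -, hme', hmf'⟩ := h'
  have hne : gef ≠ gef' := by
    rintro rfl
    exact hR.false_of_three_meets he hf hf' hfe.symm hf'e.symm hff' hme.symm hmf.symm hmf'.symm
  exact hA.false_of_three_meets hge hgef hgef' (hoe.ne_of_meets hf hfe hmf)
    (hoe.ne_of_meets hf' hf'e hmf') hne hoe.1 hme hme'

end HalfWasteful

open Classical in
noncomputable def hwSet (F : Fin n → Finset (Sym2 V)) (I : Finset (Fin n)) (R : Finset (Sym2 V))
    (e : Sym2 V) : Finset (Fin n) :=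
  {i | i ∉ I ∧ HalfWasteful R (F i) e}

section HalfWastefulSet

variable {F : Fin n → Finset (Sym2 V)} {I : Finset (Fin n)} {R : Finset (Sym2 V)} {e f : Sym2 V}
  {i : Fin n}

theorem mem_hwSet : i ∈ hwSet F I R e ↔ i ∉ I ∧ HalfWasteful R (F i) e := by
  simp [hwSet]

theorem hwDeg_eq_card_hwSet : hwDeg F I R e = #(hwSet F I R e) := by
  rw [hwDeg, ← Set.ncard_coe_finset]
  congr 1
  ext i
  simp [mem_hwSet]

theorem mem_hwSet_of_halfWastefulPair (hi : i ∉ I) (he : e ∈ R) (hef : e ≠ f)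
    (hp : HalfWastefulPair R (F i) e f) : i ∈ hwSet F I R f :=
  mem_hwSet.2 ⟨hi, e, he, hef, hp.symm⟩

open Classical in
noncomputable def hwPartners (F : Fin n → Finset (Sym2 V)) (I : Finset (Fin n))
    (R : Finset (Sym2 V)) (e : Sym2 V) : Finset (Sym2 V) :=
  {f ∈ R | f ≠ e ∧ ∃ i ∈ hwSet F I R e, HalfWastefulPair R (F i) e f}

theorem mem_hwPartners :
    f ∈ hwPartners F I R e ↔ f ∈ R ∧ f ≠ e ∧ ∃ i ∈ hwSet F I R e, HalfWastefulPair R (F i) e f := by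
  simp [hwPartners]

end HalfWastefulSet

section Counting

variable [DecidableEq V] {G : SimpleGraph V} {F : Fin n → Finset (Sym2 V)} {I : Finset (Fin n)}
  {c : Fin n → Sym2 V}

theorem IsMaximumRainbowMatching.false_of_halfWasteful_triple
    (hfree : ∀ (v : V) (w : G.Walk v v), w.IsCycle → w.length ≠ 3 ∧ w.length ≠ 5)
    (hedges : ∀ i, ∀ e ∈ F i, e ∈ G.edgeSet) (hF : ∀ i, IsMatching (F i))
    (h : IsMaximumRainbowMatching F I c) {a b : Fin n} (ha : a ∈ I) (hb : b ∈ I) (hab : a ≠ b)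
    {i j k : Fin n} (hi : i ∉ I) (hj : j ∉ I) (hk : k ∉ I) (hij : i ≠ j) (hik : i ≠ k)
    (hjk : j ≠ k) (hai : HalfWasteful (I.image c) (F i) (c a))
    (hbj : HalfWasteful (I.image c) (F j) (c b))
    (habk : HalfWastefulPair (I.image c) (F k) (c a) (c b)) : False := by
  have hloop : ∀ l, ∀ g ∈ F l, ¬g.IsDiag := fun l g hg =>
    G.not_isDiag_of_mem_edgeSet (hedges l g hg)
  have adj : ∀ {l u z}, s(u, z) ∈ F l → G.Adj u z := fun hg => hedges _ _ hg
  have unc : ∀ {x}, (∀ e ∈ I.image c, x ∉ e) → ∀ l ∈ I, x ∉ c l :=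
    fun hx l hl => hx _ (mem_image_of_mem c hl)
  obtain ⟨v, p, x, w, r, y, hv, hw, hvx, hwy, hpr, hx, hy⟩ :=
    habk.exists_pendants (hF k) (hloop k) h.1.isMatching_image (mem_image_of_mem c ha)
      (mem_image_of_mem c hb) fun hcab => hab (h.1.injOn ha hb hcab)
  obtain ⟨a₁, x₁, ha₁, hax₁, hx₁⟩ := hai.exists_pendant (hF i) (hloop i)
  obtain ⟨b₂, y₂, hb₂, hby₂, hy₂⟩ := hbj.exists_pendant (hF j) (hloop j)
  have hvp : G.Adj v p := adj (hv ▸ h.1.1 a ha)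
  have hwr : G.Adj w r := adj (hw ▸ h.1.1 b hb)
  have hC₃ := fun v (w : G.Walk v v) hw => (hfree v w hw).1
  have hC₅ := fun v (w : G.Walk v v) hw => (hfree v w hw).2
  rw [hv, Sym2.mem_iff] at ha₁
  rw [hw, Sym2.mem_iff] at hb₂
  -- A pendant at `p` (or `r`) is traded with the `F k`-pendant at the other end of the same edge,
  -- a triangle ruling out a common outer vertex; otherwise both pendants and the bridge `s(p, r)`
  -- replace `c a` and `c b`, a pentagon ruling out a common outer vertex.
  rcases ha₁ with ha₁ | ha₁ <;> subst a₁
  · rcases hb₂ with hb₂ | hb₂ <;> subst b₂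
    · refine h.false_of_pendants_and_bridge ha hb hab hv hw hvp.ne hwr.ne (unc hx₁) (unc hy₂) ?_
        hi hj hk hij hik hjk hax₁ hby₂ hpr
      rintro rfl
      have hab' := h.1.not_meets ha hb hab
      have hxa := hx₁ _ (mem_image_of_mem c ha)
      have hxb := hx₁ _ (mem_image_of_mem c hb)
      rw [hv, hw, meets_mk_mk] at hab'
      rw [hv, Sym2.mem_iff] at hxa
      rw [hw, Sym2.mem_iff] at hxb
      exact SimpleGraph.false_of_pentagon hC₅ (adj hax₁) (adj hby₂).symm hwr (adj hpr).symm
        hvp.symm (by tauto) (by tauto) (by tauto) (by tauto) (by tauto)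
    · exact h.false_of_pendants_at_both_ends hb hw hwr.ne (unc hy) (unc hy₂)
        (by rintro rfl; exact SimpleGraph.false_of_triangle hC₃ hwr (adj hby₂) (adj hwy).symm)
        hk hj hjk.symm hwy hby₂
  · exact h.false_of_pendants_at_both_ends ha hv hvp.ne (unc hx) (unc hx₁)
      (by rintro rfl; exact SimpleGraph.false_of_triangle hC₃ hvp (adj hax₁) (adj hvx).symm)
      hk hi hik.symm hvx hax₁

theorem IsMaximumRainbowMatching.exists_hwSet_eq_singleton_of_mem_hwPartners
    (hfree : ∀ (v : V) (w : G.Walk v v), w.IsCycle → w.length ≠ 3 ∧ w.length ≠ 5)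
    (hedges : ∀ i, ∀ e ∈ F i, e ∈ G.edgeSet) (hF : ∀ i, IsMatching (F i))
    (h : IsMaximumRainbowMatching F I c) {a : Fin n} (ha : a ∈ I)
    (h3 : 2 < #(hwSet F I (I.image c) (c a))) {f : Sym2 V}
    (hf : f ∈ hwPartners F I (I.image c) (c a)) :
    ∃ i, hwSet F I (I.image c) f = {i} ∧ HalfWastefulPair (I.image c) (F i) (c a) f := by
  obtain ⟨hfR, hfa, i, hi, hp⟩ := mem_hwPartners.1 hf
  obtain ⟨b, hb, rfl⟩ := mem_image.1 hfR
  have hab : a ≠ b := by rintro rfl; exact hfa rfl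
  refine ⟨i, eq_singleton_iff_unique_mem.2 ⟨mem_hwSet_of_halfWastefulPair (mem_hwSet.1 hi).1
    (mem_image_of_mem c ha) hfa.symm hp, fun j hj => ?_⟩, hp⟩
  by_contra hji
  obtain ⟨l, hl, hlij⟩ := exists_mem_notMem_of_card_lt_card
    ((card_le_two (a := i) (b := j)).trans_lt h3)
  simp only [mem_insert, mem_singleton, not_or] at hlij
  exact h.false_of_halfWasteful_triple hfree hedges hF ha hb hab (mem_hwSet.1 hl).1
    (mem_hwSet.1 hj).1 (mem_hwSet.1 hi).1 hlij.2 hlij.1 hji (mem_hwSet.1 hl).2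
    (mem_hwSet.1 hj).2 hp

theorem IsMaximumRainbowMatching.sum_card_hwSet_le
    (hfree : ∀ (v : V) (w : G.Walk v v), w.IsCycle → w.length ≠ 3 ∧ w.length ≠ 5)
    (hedges : ∀ i, ∀ e ∈ F i, e ∈ G.edgeSet) (hF : ∀ i, IsMatching (F i))
    (h : IsMaximumRainbowMatching F I c) :
    ∑ e ∈ I.image c, #(hwSet F I (I.image c) e) ≤ 2 * #I := by
  have hsingle {a} (ha : a ∈ I) h3 {f} (hf : f ∈ hwPartners F I (I.image c) (c a)) :=
    h.exists_hwSet_eq_singleton_of_mem_hwPartners hfree hedges hF ha h3 hf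
  rw [← card_image_of_injOn h.1.injOn]
  refine sum_le_two_mul_card_of_discharging (N := hwPartners F I (I.image c)) ?_ ?_
  · rintro _ he h3
    obtain ⟨a, ha, rfl⟩ := mem_image.1 he
    refine ⟨fun f hf => (mem_hwPartners.1 hf).1, card_le_card_of_forall_subsingleton
      (fun i f => HalfWastefulPair (I.image c) (F i) (c a) f) (fun i hi => ?_) (fun f hf => ?_),
      fun f hf => ?_⟩
    · obtain ⟨f, hf, hfa, hp⟩ := (mem_hwSet.1 hi).2
      exact ⟨f, mem_hwPartners.2 ⟨hf, hfa, i, hi, hp⟩, hp⟩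
    · rintro i ⟨hi, hpi⟩ j ⟨hj, hpj⟩
      obtain ⟨k, hk, -⟩ := hsingle ha h3 hf
      have hfa := (mem_hwPartners.1 hf).2.1.symm
      have hik := mem_hwSet_of_halfWastefulPair (mem_hwSet.1 hi).1 (mem_image_of_mem c ha) hfa hpi
      have hjk := mem_hwSet_of_halfWastefulPair (mem_hwSet.1 hj).1 (mem_image_of_mem c ha) hfa hpj
      rw [hk, mem_singleton] at hik hjk
      exact hik.trans hjk.symm
    · obtain ⟨k, hk, -⟩ := hsingle ha h3 hf
      simp [hk]
  · rintro _ he _ he' h3 h3' hne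
    obtain ⟨a, ha, rfl⟩ := mem_image.1 he
    obtain ⟨a', ha', rfl⟩ := mem_image.1 he'
    refine disjoint_left.2 fun f hf hf' => hne ?_
    obtain ⟨i, hi, hp⟩ := hsingle ha h3 hf
    obtain ⟨i', hi', hp'⟩ := hsingle ha' h3' hf'
    obtain rfl : i = i' := singleton_inj.1 (hi.symm.trans hi')
    exact hp.symm.eq_of_halfWastefulPair (hF i) h.1.isMatching_image (mem_hwPartners.1 hf).1
      (mem_image_of_mem c ha) (mem_image_of_mem c ha') (mem_hwPartners.1 hf).2.1.symm
      (mem_hwPartners.1 hf').2.1.symm hp'.symm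

end Counting

end

theorem stmt_12_general {V : Type*} [DecidableEq V] (G : SimpleGraph V) (n : ℕ)
    (hfree : ∀ (v : V) (w : G.Walk v v), w.IsCycle → w.length ≠ 3 ∧ w.length ≠ 5)
    (F : Fin n → Finset (Sym2 V))
    (hedges : ∀ i, ∀ e ∈ F i, e ∈ G.edgeSet)
    (hmatch : ∀ i, ∀ e ∈ F i, ∀ f ∈ F i, e ≠ f → ∀ v, v ∈ e → v ∉ f)
    (I : Finset (Fin n)) (c : Fin n → Sym2 V)
    (hc : ∀ i ∈ I, c i ∈ F i)
    (hdisj : ∀ i ∈ I, ∀ j ∈ I, i ≠ j → ∀ v, v ∈ c i → v ∉ c j)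
    (hmax : ∀ (J : Finset (Fin n)) (d : Fin n → Sym2 V),
      (∀ i ∈ J, d i ∈ F i) →
      (∀ i ∈ J, ∀ j ∈ J, i ≠ j → ∀ v, v ∈ d i → v ∉ d j) →
      J.card ≤ I.card) :
    ∑ e ∈ I.image c, hwDeg F I (I.image c) e ≤ 2 * I.card := by
  have hR : IsMaximumRainbowMatching F I c :=
    ⟨⟨hc, fun i hi j hj hij ⟨v, hvi, hvj⟩ => hdisj i hi j hj hij v hvi hvj⟩,
      fun J d hd => hmax J d hd.1 fun i hi j hj hij v hvi hvj => hd.2 hi hj hij ⟨v, hvi, hvj⟩⟩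
  have hF : ∀ i, IsMatching (F i) := fun i e he f hf hef ⟨v, hve, hvf⟩ =>
    hmatch i e he f hf hef v hve hvf
  simpa only [hwDeg_eq_card_hwSet] using hR.sum_card_hwSet_le hfree hedges hF

/-- In a graph with no 3-cycle and no 5-cycle, with `F₁, …, Fₙ`
matchings of size `n` and `R = I.image c` a maximum-size rainbow matching of size
`q = |I|`, we have `Σ_{e ∈ R} |HW(e)| ≤ 2q`, where `HW(e)` is the set of unrepresented
matchings `Fᵢ` for which `e` is half-`Fᵢ`-wasteful. -/
theorem stmt_12 {V : Type*} [DecidableEq V] (G : SimpleGraph V) (n : ℕ)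
    (hfree : ∀ (v : V) (w : G.Walk v v), w.IsCycle → w.length ≠ 3 ∧ w.length ≠ 5)
    (F : Fin n → Finset (Sym2 V))
    (hedges : ∀ i, ∀ e ∈ F i, e ∈ G.edgeSet)
    (hmatch : ∀ i, ∀ e ∈ F i, ∀ f ∈ F i, e ≠ f → ∀ v, v ∈ e → v ∉ f)
    (hsize : ∀ i, (F i).card = n)
    (I : Finset (Fin n)) (c : Fin n → Sym2 V)
    (hc : ∀ i ∈ I, c i ∈ F i)
    (hdisj : ∀ i ∈ I, ∀ j ∈ I, i ≠ j → ∀ v, v ∈ c i → v ∉ c j)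
    (hmax : ∀ (J : Finset (Fin n)) (d : Fin n → Sym2 V),
      (∀ i ∈ J, d i ∈ F i) →
      (∀ i ∈ J, ∀ j ∈ J, i ≠ j → ∀ v, v ∈ d i → v ∉ d j) →
      J.card ≤ I.card) :
    ∑ e ∈ I.image c, hwDeg F I (I.image c) e ≤ 2 * I.card :=
  stmt_12_general G n hfree F hedges hmatch I c hc hdisj hmax
end

section
/- Let F_1, …, F_n be pairwise disjoint matchings of size n in a graph, and let R be a rainbow matching of maximum size q. For e ∈ R let HW(e) be the set of unrepresented matchings F_i for which e is half-F_i-wasteful. Then Σ_{e ∈ R} |HW(e)| ≤ 4q. -/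
section

open Finset

variable {V : Type*}

theorem meets_comm {e f : Sym2 V} : Meets e f ↔ Meets f e := by
  simp only [Meets, and_comm]

theorem meets_mk_left {a b : V} {e : Sym2 V} : Meets s(a, b) e ↔ a ∈ e ∨ b ∈ e := by
  simp [Meets]

structure MaxRainbow (V : Type*) where
  n : ℕ
  F : Fin n → Finset (Sym2 V)
  I : Finset (Fin n)
  c : Fin n → Sym2 V
  loopless : ∀ i, ∀ g ∈ F i, ¬ g.IsDiag
  isMatching : ∀ i, ∀ g ∈ F i, ∀ h ∈ F i, Meets g h → g = h
  disjoint : ∀ i j, i ≠ j → Disjoint (F i) (F j)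
  c_mem : ∀ i ∈ I, c i ∈ F i
  rainbow : ∀ i ∈ I, ∀ j ∈ I, Meets (c i) (c j) → i = j
  maximal : ∀ (J : Finset (Fin n)) (d : Fin n → Sym2 V), (∀ i ∈ J, d i ∈ F i) →
    (∀ i ∈ J, ∀ j ∈ J, Meets (d i) (d j) → i = j) → J.card ≤ I.card

namespace MaxRainbow

variable {C : MaxRainbow V} {i j k : Fin C.n} {e f g : Sym2 V} {u v w : V}

theorem eq_of_mem_of_mem (hk : k ∈ C.I) (hj : j ∈ C.I) (hvk : v ∈ C.c k) (hvj : v ∈ C.c j) :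
    k = j :=
  C.rainbow k hk j hj ⟨v, hvk, hvj⟩

theorem eq_of_mem_F (hi : g ∈ C.F i) (hj : g ∈ C.F j) : i = j := by
  by_contra hij
  exact disjoint_left.1 (C.disjoint i j hij) hi hj

variable [DecidableEq V]

variable (C) in
def R : Finset (Sym2 V) := C.I.image C.c

variable (C) in
def Uncovered (u : V) : Prop := ∀ e ∈ C.R, u ∉ e

theorem c_mem_R (hk : k ∈ C.I) : C.c k ∈ C.R := mem_image_of_mem _ hk

theorem exists_of_mem_R (he : e ∈ C.R) : ∃ k ∈ C.I, C.c k = e := mem_image.1 he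

theorem ne_of_mk_mem_R {x y : V} (h : s(x, y) ∈ C.R) : x ≠ y := by
  obtain ⟨k, hk, hck⟩ := exists_of_mem_R h
  exact fun hxy => C.loopless k _ (C.c_mem k hk) (hck ▸ Sym2.mk_isDiag_iff.2 hxy)

theorem eq_of_mem_R (he : e ∈ C.R) (hf : f ∈ C.R) (hve : v ∈ e) (hvf : v ∈ f) : e = f := by
  obtain ⟨k, hk, rfl⟩ := exists_of_mem_R he
  obtain ⟨j, hj, rfl⟩ := exists_of_mem_R hf
  rw [eq_of_mem_of_mem hk hj hve hvf]

theorem ne_of_mem_R_of_ne (he : e ∈ C.R) (hf : f ∈ C.R) (hef : e ≠ f) (hv : v ∈ e)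
    (hw : w ∈ f) : v ≠ w := by
  rintro rfl
  exact hef (eq_of_mem_R he hf hv hw)

theorem ne_of_mk_mem_R_of_uncovered {x y : V} (h : s(x, y) ∈ C.R) (hu : C.Uncovered u) :
    x ≠ u ∧ y ≠ u :=
  ⟨by rintro rfl; exact hu _ h (Sym2.mem_mk_left _ y),
    by rintro rfl; exact hu _ h (Sym2.mem_mk_right x _)⟩

theorem notMem_R_of_mem_F (hi : i ∉ C.I) (hg : g ∈ C.F i) : g ∉ C.R := by
  intro hgR
  obtain ⟨k, hk, rfl⟩ := exists_of_mem_R hgR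
  exact hi (eq_of_mem_F hg (C.c_mem k hk) ▸ hk)

/-- Replacing the edges `c k`, `k ∈ S`, of `R` by the edges `g j`, `j ∈ N`, gives a rainbow
matching, so maximality bounds `|N|` by `|S|`. -/
theorem card_le_of_exchange {S N : Finset (Fin C.n)} (hS : S ⊆ C.I) (hN : Disjoint N C.I)
    (g : Fin C.n → Sym2 V) (hg : ∀ j ∈ N, g j ∈ C.F j)
    (hgg : ∀ j ∈ N, ∀ k ∈ N, Meets (g j) (g k) → j = k)
    (hgS : ∀ j ∈ N, ∀ v ∈ g j, C.Uncovered v ∨ ∃ k ∈ S, v ∈ C.c k) :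
    N.card ≤ S.card := by
  have hgc : ∀ j ∈ N, ∀ k ∈ C.I, Meets (g j) (C.c k) → k ∈ S := by
    rintro j hj k hk ⟨v, hvg, hvk⟩
    rcases hgS j hj v hvg with hv | ⟨l, hl, hvl⟩
    · exact absurd hvk (hv _ (c_mem_R hk))
    · rwa [eq_of_mem_of_mem hk (hS hl) hvk hvl]
  let d j := if j ∈ N then g j else C.c j
  have hmem : ∀ j ∈ C.I \ S ∪ N, d j ∈ C.F j := by
    intro j hj
    by_cases hjN : j ∈ N
    · simpa [d, hjN] using hg j hjN
    · simpa [d, hjN] using C.c_mem j (mem_sdiff.1 ((mem_union.1 hj).resolve_right hjN)).1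
  have hpair : ∀ j ∈ C.I \ S ∪ N, ∀ k ∈ C.I \ S ∪ N, Meets (d j) (d k) → j = k := by
    intro j hj k hk h
    simp only [mem_union, mem_sdiff] at hj hk
    by_cases hjN : j ∈ N <;> by_cases hkN : k ∈ N <;>
      simp only [d, hjN, hkN, if_true, if_false] at h
    · exact hgg j hjN k hkN h
    · exact absurd (hgc j hjN k (hk.resolve_right hkN).1 h) (hk.resolve_right hkN).2
    · exact absurd (hgc k hkN j (hj.resolve_right hjN).1 (meets_comm.1 h)) (hj.resolve_right hjN).2
    · exact C.rainbow j (hj.resolve_right hjN).1 k (hk.resolve_right hkN).1 h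
  have hJ := C.maximal _ d hmem hpair
  rw [card_union_of_disjoint (hN.symm.mono_left sdiff_subset), card_sdiff_of_subset hS] at hJ
  have := card_le_card hS
  omega

/-- There is no rainbow augmenting path `u x y w` with `xy ∈ R`: its ends coincide. -/
theorem ends_eq_of_path₃ {x y : V} (hxy : s(x, y) ∈ C.R) (hu : C.Uncovered u)
    (hw : C.Uncovered w) (hij : i ≠ j) (hi : i ∉ C.I) (hj : j ∉ C.I) (hux : s(u, x) ∈ C.F i)
    (hyw : s(y, w) ∈ C.F j) : u = w := by
  by_contra huw
  obtain ⟨k, hk, hck⟩ := exists_of_mem_R hxy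
  have := ne_of_mk_mem_R hxy
  have := ne_of_mk_mem_R_of_uncovered hxy hu
  have := ne_of_mk_mem_R_of_uncovered hxy hw
  let g l := if l = i then s(u, x) else s(y, w)
  have hg : ∀ l ∈ ({i, j} : Finset _), g l ∈ C.F l := by
    simp only [mem_insert, mem_singleton]
    rintro l (rfl | rfl) <;> simp [g, hij.symm, hux, hyw]
  have hgg : ∀ l ∈ ({i, j} : Finset _), ∀ l' ∈ ({i, j} : Finset _),
      Meets (g l) (g l') → l = l' := by
    simp only [mem_insert, mem_singleton]
    rintro l (rfl | rfl) l' (rfl | rfl) h <;> simp [g, hij.symm, meets_mk_left] at h ⊢ <;> grind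
  have hgS : ∀ l ∈ ({i, j} : Finset _), ∀ v ∈ g l,
      C.Uncovered v ∨ ∃ k' ∈ ({k} : Finset _), v ∈ C.c k' := by
    simp only [mem_insert, mem_singleton]
    rintro l (rfl | rfl) <;> simp [g, hij.symm, hck, hu, hw]
  have := card_le_of_exchange (singleton_subset_iff.2 hk) (by simp [hi, hj]) g hg hgg hgS
  simp [card_pair hij] at this

/-- There is no rainbow augmenting path `u x a b y w` with `xa, by ∈ R`: its ends coincide. -/
theorem ends_eq_of_path₅ {x a b y : V} (hxa : s(x, a) ∈ C.R) (hby : s(b, y) ∈ C.R)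
    (hne : s(x, a) ≠ s(b, y)) (hu : C.Uncovered u) (hw : C.Uncovered w) (hij : i ≠ j)
    (hik : i ≠ k) (hjk : j ≠ k) (hi : i ∉ C.I) (hj : j ∉ C.I) (hk : k ∉ C.I)
    (hux : s(u, x) ∈ C.F i) (hab : s(a, b) ∈ C.F j) (hyw : s(y, w) ∈ C.F k) : u = w := by
  by_contra huw
  obtain ⟨k₁, hk₁, hck₁⟩ := exists_of_mem_R hxa
  obtain ⟨k₂, hk₂, hck₂⟩ := exists_of_mem_R hby
  have hk₁₂ : k₁ ≠ k₂ := by rintro rfl; exact hne (hck₁.symm.trans hck₂)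
  have := ne_of_mk_mem_R hxa
  have := ne_of_mk_mem_R hby
  have := ne_of_mk_mem_R_of_uncovered hxa hu
  have := ne_of_mk_mem_R_of_uncovered hxa hw
  have := ne_of_mk_mem_R_of_uncovered hby hu
  have := ne_of_mk_mem_R_of_uncovered hby hw
  have hxa_by : ∀ v ∈ s(x, a), ∀ v' ∈ s(b, y), v ≠ v' := fun _ hv _ hv' =>
    ne_of_mem_R_of_ne hxa hby hne hv hv'
  simp only [Sym2.ball] at hxa_by
  let g l := if l = i then s(u, x) else if l = j then s(a, b) else s(y, w)
  have hg : ∀ l ∈ ({i, j, k} : Finset _), g l ∈ C.F l := by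
    simp only [mem_insert, mem_singleton]
    rintro l (rfl | rfl | rfl) <;> simp [g, hij.symm, hik.symm, hjk.symm, hux, hab, hyw]
  have hgg : ∀ l ∈ ({i, j, k} : Finset _), ∀ l' ∈ ({i, j, k} : Finset _),
      Meets (g l) (g l') → l = l' := by
    simp only [mem_insert, mem_singleton]
    rintro l (rfl | rfl | rfl) l' (rfl | rfl | rfl) h <;>
      simp [g, hij.symm, hik.symm, hjk.symm, meets_mk_left] at h ⊢ <;> grind
  have hgS : ∀ l ∈ ({i, j, k} : Finset _), ∀ v ∈ g l,
      C.Uncovered v ∨ ∃ k' ∈ ({k₁, k₂} : Finset _), v ∈ C.c k' := by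
    simp only [mem_insert, mem_singleton]
    rintro l (rfl | rfl | rfl) <;> simp [g, hij.symm, hik.symm, hjk.symm, hck₁, hck₂, hu, hw]
  have hS : {k₁, k₂} ⊆ C.I := by simp [insert_subset_iff, hk₁, hk₂]
  have := card_le_of_exchange hS (by simp [hi, hj, hk]) g hg hgg hgS
  simp [card_pair hk₁₂, card_insert_of_notMem, hij, hik, card_pair hjk] at this

/-- The path `u x a b y z` witnessing that `e = xa` is half-`F i`-wasteful: `ux, ab, yz ∈ F i`,
the partner edge `by` lies in `R`, and the ends `u, z` are uncovered. -/
structure Witness (C : MaxRainbow V) (i : Fin C.n) (e : Sym2 V) where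
  (u x a b y z : V)
  edge_eq : e = s(x, a)
  partner_mem : s(b, y) ∈ C.R
  partner_ne : s(b, y) ≠ e
  uncovered_u : C.Uncovered u
  uncovered_z : C.Uncovered z
  ux_mem : s(u, x) ∈ C.F i
  ab_mem : s(a, b) ∈ C.F i
  yz_mem : s(y, z) ∈ C.F i

theorem Witness.x_mem (w : C.Witness i e) : w.x ∈ e := by
  simpa [← w.edge_eq] using Sym2.mem_mk_left w.x w.a

theorem Witness.a_mem (w : C.Witness i e) : w.a ∈ e := by
  simpa [← w.edge_eq] using Sym2.mem_mk_right w.x w.a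

theorem exists_eq_uncovered_of_meetsOnly (hi : i ∉ C.I) (hg : g ∈ C.F i) (he : e ∈ C.R)
    (h : MeetsOnly C.R g e) : ∃ x ∈ e, ∃ u, g = s(x, u) ∧ C.Uncovered u := by
  obtain ⟨⟨x, hxg, hxe⟩, honly⟩ := h
  obtain ⟨u, rfl⟩ := Sym2.mem_iff_exists.1 hxg
  refine ⟨x, hxe, u, rfl, fun f hf huf => ?_⟩
  by_cases hfe : f = e
  · subst hfe
    have hxu : x ≠ u := fun h => C.loopless i _ hg (Sym2.mk_isDiag_iff.2 h)
    exact notMem_R_of_mem_F hi hg ((Sym2.mem_and_mem_iff hxu).1 ⟨hxe, huf⟩ ▸ hf)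
  · exact honly f hf hfe ⟨u, Sym2.mem_mk_right x u, huf⟩

theorem nonempty_witness (hi : i ∉ C.I) (he : e ∈ C.R) (h : HalfWasteful C.R (C.F i) e) :
    Nonempty (C.Witness i e) := by
  obtain ⟨f, hf, hfe, ge, hge, gf, hgf, gef, hgef, hMe, hMf, ⟨a, hagef, hae⟩, hgef_f⟩ := h
  obtain ⟨x, hxe, u, rfl, hu⟩ := exists_eq_uncovered_of_meetsOnly hi hge he hMe
  obtain ⟨y, hyf, z, rfl, hz⟩ := exists_eq_uncovered_of_meetsOnly hi hgf hf hMf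
  obtain ⟨b, rfl⟩ := Sym2.mem_iff_exists.1 hagef
  have hbf : b ∈ f := by
    obtain ⟨w, hw, hwf⟩ := hgef_f
    rcases Sym2.mem_iff.1 hw with rfl | rfl
    · exact absurd (eq_of_mem_R hf he hwf hae) hfe
    · exact hwf
  have hxa : x ≠ a := by
    rintro rfl
    have := C.isMatching i _ hge _ hgef ⟨x, Sym2.mem_mk_left x u, Sym2.mem_mk_left x b⟩
    exact hMe.2 f hf hfe (this ▸ ⟨b, Sym2.mem_mk_right x b, hbf⟩)
  have hyb : y ≠ b := by
    rintro rfl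
    have := C.isMatching i _ hgf _ hgef ⟨y, Sym2.mem_mk_left y z, Sym2.mem_mk_right a y⟩
    exact hMf.2 e he (Ne.symm hfe) (this ▸ ⟨a, Sym2.mem_mk_left a y, hae⟩)
  have he_eq := (Sym2.mem_and_mem_iff hxa).1 ⟨hxe, hae⟩
  have hf_eq := (Sym2.mem_and_mem_iff hyb.symm).1 ⟨hbf, hyf⟩
  exact ⟨⟨u, x, a, b, y, z, he_eq, hf_eq ▸ hf, hf_eq ▸ hfe, hu, hz,
    Sym2.eq_swap ▸ hge, hgef, hgf⟩⟩

variable (C) in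
open Classical in
noncomputable def incidences : Finset (Fin C.n × Sym2 V) :=
  (univ ×ˢ C.R).filter fun p => p.1 ∉ C.I ∧ HalfWasteful C.R (C.F p.1) p.2

theorem mem_incidences {i : Fin C.n} :
    (i, e) ∈ C.incidences ↔ e ∈ C.R ∧ i ∉ C.I ∧ HalfWasteful C.R (C.F i) e := by
  simp [incidences]

variable (C) in
abbrev Incidence := ↥C.incidences

namespace Incidence

variable {p q : C.Incidence}

def idx (p : C.Incidence) : Fin C.n := p.1.1

def edge (p : C.Incidence) : Sym2 V := p.1.2

theorem edge_mem_R (p : C.Incidence) : p.edge ∈ C.R := (mem_incidences.1 p.2).1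

theorem idx_notMem (p : C.Incidence) : p.idx ∉ C.I := (mem_incidences.1 p.2).2.1

theorem halfWasteful (p : C.Incidence) : HalfWasteful C.R (C.F p.idx) p.edge :=
  (mem_incidences.1 p.2).2.2

theorem ext_edge_idx (he : p.edge = q.edge) (hi : p.idx = q.idx) : p = q :=
  Subtype.ext (Prod.ext hi he)

noncomputable def wit (p : C.Incidence) : C.Witness p.idx p.edge :=
  Classical.choice (nonempty_witness p.idx_notMem p.edge_mem_R p.halfWasteful)

noncomputable def partner (p : C.Incidence) : Sym2 V := s(p.wit.b, p.wit.y)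

theorem mk_mem_R (p : C.Incidence) : s(p.wit.x, p.wit.a) ∈ C.R :=
  p.wit.edge_eq ▸ p.edge_mem_R

end Incidence

open Incidence

variable {p q r : C.Incidence}

variable (C) in
open Classical in
noncomputable def based (e : Sym2 V) (v : V) : Finset C.Incidence :=
  univ.filter fun p => p.edge = e ∧ p.wit.x = v

theorem mem_based : p ∈ C.based e v ↔ p.edge = e ∧ p.wit.x = v := by
  simp [based]

theorem eq_of_mem_based_of_u_eq (hp : p ∈ C.based e v) (hq : q ∈ C.based e v)
    (hu : p.wit.u = q.wit.u) : p = q := by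
  rw [mem_based] at hp hq
  have hpF := p.wit.ux_mem
  have hqF := q.wit.ux_mem
  rw [hp.2, hu] at hpF
  rw [hq.2] at hqF
  exact ext_edge_idx (hp.1.trans hq.1.symm) (eq_of_mem_F hpF hqF)

variable (C) in
theorem card_filter_idx_eq_le_one (e : Sym2 V) (v : V) (j : Fin C.n) :
    ((C.based e v).filter (·.idx = j)).card ≤ 1 := by
  refine card_le_one.2 fun p hp q hq => ?_
  simp only [mem_filter, mem_based] at hp hq
  exact ext_edge_idx (hp.1.1.trans hq.1.1.symm) (hp.2.trans hq.2.symm)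

variable (C) in
theorem card_filter_u_eq_le_one (e : Sym2 V) (v w : V) :
    ((C.based e v).filter (·.wit.u = w)).card ≤ 1 := by
  refine card_le_one.2 fun p hp q hq => ?_
  simp only [mem_filter] at hp hq
  exact eq_of_mem_based_of_u_eq hp.1 hq.1 (hp.2.trans hq.2.symm)

theorem exists_mem_based_avoiding (h : 3 < (C.based e v).card) (j₁ j₂ : Fin C.n) (w : V) :
    ∃ q ∈ C.based e v, q.idx ≠ j₁ ∧ q.idx ≠ j₂ ∧ q.wit.u ≠ w := by
  by_contra! hcon
  have hsub : C.based e v ⊆ ((C.based e v).filter (·.idx = j₁) ∪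
      (C.based e v).filter (·.idx = j₂)) ∪ (C.based e v).filter (·.wit.u = w) := by
    intro q hq
    simp only [mem_union, mem_filter, hq, true_and]
    tauto
  have := C.card_filter_idx_eq_le_one e v j₁
  have := C.card_filter_idx_eq_le_one e v j₂
  have := C.card_filter_u_eq_le_one e v w
  have : (C.based e v).card ≤ 3 := calc
    _ ≤ _ := card_le_card hsub
    _ ≤ _ := card_union_le _ _
    _ ≤ _ := add_le_add_left (card_union_le _ _) _
    _ ≤ 3 := by omega
  omega

def Crowded (p : C.Incidence) : Prop := 3 < (C.based p.edge p.wit.x).card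

noncomputable instance : DecidablePred (Crowded (C := C)) :=
  fun _ => inferInstanceAs (Decidable (3 < _))

/-- Otherwise a spare incidence at the crowded slot `(e, x)` would close the rainbow
augmenting path `u' x a b y w`. -/
theorem idx_eq_of_crowded (hp : Crowded p) (hj : j ∉ C.I) (hyw : s(p.wit.y, w) ∈ C.F j)
    (hw : C.Uncovered w) : j = p.idx := by
  by_contra hjp
  obtain ⟨q, hq, hqp, hqj, hqw⟩ := exists_mem_based_avoiding hp p.idx j w
  have hqx := (mem_based.1 hq).2
  have hux := q.wit.ux_mem
  rw [hqx] at hux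
  exact hqw (ends_eq_of_path₅ p.mk_mem_R p.wit.partner_mem
    (p.wit.edge_eq ▸ p.wit.partner_ne.symm) q.wit.uncovered_u hw hqp hqj (Ne.symm hjp)
    q.idx_notMem p.idx_notMem hj hux p.wit.ab_mem hyw)

variable (C) in
open Classical in
noncomputable def exported (f : Sym2 V) (v : V) : Finset C.Incidence :=
  univ.filter fun p => Crowded p ∧ p.partner = f ∧ p.wit.y = v

theorem mem_exported : p ∈ C.exported f v ↔ Crowded p ∧ p.partner = f ∧ p.wit.y = v := by
  simp [exported]

theorem idx_eq_of_mem_based_partner (hp : Crowded p) (hq : q ∈ C.based p.partner p.wit.y) :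
    q.idx = p.idx := by
  have hux := q.wit.ux_mem
  rw [(mem_based.1 hq).2, Sym2.eq_swap] at hux
  exact idx_eq_of_crowded hp q.idx_notMem hux q.wit.uncovered_u

theorem card_based_le_one_of_mem_exported (hp : p ∈ C.exported f v) :
    (C.based f v).card ≤ 1 := by
  obtain ⟨hpc, rfl, rfl⟩ := mem_exported.1 hp
  refine card_le_one.2 fun q hq r hr =>
    ext_edge_idx ((mem_based.1 hq).1.trans (mem_based.1 hr).1.symm) ?_
  rw [idx_eq_of_mem_based_partner hpc hq, idx_eq_of_mem_based_partner hpc hr]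

variable (C) in
theorem card_exported_le_one (f : Sym2 V) (v : V) : (C.exported f v).card ≤ 1 := by
  refine card_le_one.2 fun p hp q hq => ?_
  obtain ⟨hpc, hpf, hpv⟩ := mem_exported.1 hp
  obtain ⟨-, hqf, hqv⟩ := mem_exported.1 hq
  have hqz := q.wit.yz_mem
  rw [hqv, ← hpv] at hqz
  have hidx := idx_eq_of_crowded hpc q.idx_notMem hqz q.wit.uncovered_z
  have hb : p.wit.b = q.wit.b := by
    rw [← hpf, partner, partner, hpv, ← hqv] at hqf
    exact (Sym2.congr_left.1 hqf).symm
  have hab : s(q.wit.a, p.wit.b) ∈ C.F p.idx := hb ▸ hidx ▸ q.wit.ab_mem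
  have hlink := C.isMatching _ _ p.wit.ab_mem _ hab
    ⟨p.wit.b, Sym2.mem_mk_right _ _, Sym2.mem_mk_right _ _⟩
  have ha : p.wit.a = q.wit.a := Sym2.congr_left.1 hlink
  have hedge := eq_of_mem_R p.edge_mem_R q.edge_mem_R p.wit.a_mem (ha ▸ q.wit.a_mem)
  exact ext_edge_idx hedge hidx.symm

theorem u_eq_of_mem_based_mate {m u₀ : V} {i₀ : Fin C.n} (hvm : s(v, m) ∈ C.R)
    (hi₀ : i₀ ∉ C.I) (hfree : s(u₀, v) ∈ C.F i₀) (hu₀ : C.Uncovered u₀)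
    (hq : q ∈ C.based s(v, m) m) (hne : q.idx ≠ i₀) : u₀ = q.wit.u := by
  have hux := q.wit.ux_mem
  rw [(mem_based.1 hq).2, Sym2.eq_swap] at hux
  exact ends_eq_of_path₃ hvm hu₀ q.wit.uncovered_u (Ne.symm hne) hi₀ q.idx_notMem hfree hux

theorem card_based_mate_le_two {m : V} (hp : p ∈ C.exported s(v, m) v) :
    (C.based s(v, m) m).card ≤ 2 := by
  obtain ⟨-, hpf, hpv⟩ := mem_exported.1 hp
  have hvm : s(v, m) ∈ C.R := hpf ▸ p.wit.partner_mem
  have hfree := p.wit.yz_mem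
  rw [hpv, Sym2.eq_swap] at hfree
  have hsub : C.based s(v, m) m ⊆ (C.based s(v, m) m).filter (·.idx = p.idx) ∪
      (C.based s(v, m) m).filter (·.wit.u = p.wit.z) := by
    intro q hq
    by_cases hqp : q.idx = p.idx
    · exact mem_union_left _ (mem_filter.2 ⟨hq, hqp⟩)
    · exact mem_union_right _ (mem_filter.2 ⟨hq,
        (u_eq_of_mem_based_mate hvm p.idx_notMem hfree p.wit.uncovered_z hq hqp).symm⟩)
  have := C.card_filter_idx_eq_le_one s(v, m) m p.idx
  have := C.card_filter_u_eq_le_one s(v, m) m p.wit.z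
  calc _ ≤ _ := card_le_card hsub
    _ ≤ _ := card_union_le _ _
    _ ≤ 2 := by omega

theorem based_mate_eq_empty {m : V} (hvm : s(v, m) ∈ C.R) (h : 1 < (C.based s(v, m) v).card) :
    C.based s(v, m) m = ∅ := by
  obtain ⟨q₁, hq₁, q₂, hq₂, hq₁₂⟩ := one_lt_card.1 h
  refine eq_empty_of_forall_notMem fun r hr => hq₁₂ (eq_of_mem_based_of_u_eq hq₁ hq₂ ?_)
  have hidx_ne : ∀ q ∈ C.based s(v, m) v, r.idx ≠ q.idx := fun q hq hrq =>
    ne_of_mk_mem_R hvm (by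
      rw [← (mem_based.1 hq).2, ← (mem_based.1 hr).2,
        ext_edge_idx ((mem_based.1 hr).1.trans (mem_based.1 hq).1.symm) hrq])
  have hu : ∀ q ∈ C.based s(v, m) v, q.wit.u = r.wit.u := fun q hq => by
    have hfree := q.wit.ux_mem
    rw [(mem_based.1 hq).2] at hfree
    exact u_eq_of_mem_based_mate hvm q.idx_notMem hfree q.wit.uncovered_u hr (hidx_ne q hq)
  rw [hu q₁ hq₁, hu q₂ hq₂]

variable (C) in
theorem card_based_not_crowded_le_three (e : Sym2 V) (v : V) :
    ((C.based e v).filter (¬ Crowded ·)).card ≤ 3 := by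
  rcases ((C.based e v).filter (¬ Crowded ·)).eq_empty_or_nonempty with h | ⟨p, hp⟩
  · simp [h]
  · obtain ⟨hpb, hpc⟩ := mem_filter.1 hp
    obtain ⟨rfl, rfl⟩ := mem_based.1 hpb
    exact (card_filter_le _ _).trans (not_lt.1 hpc)

noncomputable def target (p : C.Incidence) : Sym2 V := if Crowded p then p.partner else p.edge

theorem target_mem_R (p : C.Incidence) : target p ∈ C.R := by
  unfold target
  split
  · exact p.wit.partner_mem
  · exact p.edge_mem_R

theorem filter_target_subset (v m : V) :
    univ.filter (fun p : C.Incidence => target p = s(v, m)) ⊆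
      ((C.based s(v, m) v).filter (¬ Crowded ·) ∪ (C.based s(v, m) m).filter (¬ Crowded ·)) ∪
        (C.exported s(v, m) v ∪ C.exported s(v, m) m) := by
  intro p hp
  replace hp := (mem_filter.1 hp).2
  unfold target at hp
  simp only [mem_union, mem_filter, mem_based, mem_exported]
  split_ifs at hp with hpc
  · have hy : p.wit.y ∈ s(v, m) := hp ▸ Sym2.mem_mk_right _ _
    rcases Sym2.mem_iff.1 hy with h | h <;> simp [hpc, hp, h]
  · have hx : p.wit.x ∈ s(v, m) := hp ▸ p.wit.x_mem
    rcases Sym2.mem_iff.1 hx with h | h <;> simp [hpc, hp, h]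

theorem card_filter_target_le_four (hf : f ∈ C.R) :
    (univ.filter fun p : C.Incidence => target p = f).card ≤ 4 := by
  induction f using Sym2.ind with | h v m => ?_
  have hE : ∀ {x y}, s(x, y) = s(v, m) → (C.exported s(v, m) x).card = 0 ∨
      ((C.based s(v, m) x).card ≤ 1 ∧ (C.based s(v, m) y).card ≤ 2) := by
    intro x y hxy
    rw [← hxy]
    rcases (C.exported s(x, y) x).eq_empty_or_nonempty with h | ⟨p, hp⟩
    · simp [h]
    · exact Or.inr ⟨card_based_le_one_of_mem_exported hp, card_based_mate_le_two hp⟩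
  have hN : ∀ {x y}, s(x, y) = s(v, m) → 1 < (C.based s(v, m) x).card →
      (C.based s(v, m) y).card = 0 := by
    intro x y hxy h
    rw [← hxy] at h ⊢
    simp [based_mate_eq_empty (hxy ▸ hf) h]
  have := hE rfl; have := hE Sym2.eq_swap; have := hN rfl; have := hN Sym2.eq_swap
  have := C.card_exported_le_one s(v, m) v; have := C.card_exported_le_one s(v, m) m
  have := C.card_based_not_crowded_le_three s(v, m) v
  have := C.card_based_not_crowded_le_three s(v, m) m
  have := card_filter_le (C.based s(v, m) v) (¬ Crowded ·)
  have := card_filter_le (C.based s(v, m) m) (¬ Crowded ·)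
  calc _ ≤ _ := card_le_card (filter_target_subset v m)
    _ ≤ _ := card_union_le _ _
    _ ≤ _ := add_le_add (card_union_le _ _) (card_union_le _ _)
    _ ≤ 4 := by omega

theorem hwDeg_eq_card (he : e ∈ C.R) :
    hwDeg C.F C.I C.R e = (univ.filter fun p : C.Incidence => p.edge = e).card := by
  rw [hwDeg, ← Set.ncard_coe_finset]
  refine (Set.ncard_congr (fun p _ => p.idx) ?_ ?_ ?_).symm
  · intro p hp
    rw [mem_coe, mem_filter] at hp
    exact ⟨p.idx_notMem, hp.2 ▸ p.halfWasteful⟩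
  · intro p q hp hq h
    rw [mem_coe, mem_filter] at hp hq
    exact ext_edge_idx (hp.2.trans hq.2.symm) h
  · rintro i ⟨hi, hw⟩
    exact ⟨⟨(i, e), mem_incidences.2 ⟨he, hi, hw⟩⟩,
      mem_filter.2 ⟨mem_univ _, rfl⟩, rfl⟩

theorem sum_hwDeg_le : ∑ e ∈ C.R, hwDeg C.F C.I C.R e ≤ 4 * C.I.card := calc
  ∑ e ∈ C.R, hwDeg C.F C.I C.R e
    = ∑ e ∈ C.R, (univ.filter fun p : C.Incidence => p.edge = e).card :=
      sum_congr rfl fun _ he => hwDeg_eq_card he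
  _ = (univ : Finset C.Incidence).card :=
      (card_eq_sum_card_fiberwise fun p _ => p.edge_mem_R).symm
  _ = ∑ f ∈ C.R, (univ.filter fun p : C.Incidence => target p = f).card :=
      card_eq_sum_card_fiberwise fun p _ => target_mem_R p
  _ ≤ ∑ _f ∈ C.R, 4 := sum_le_sum fun f hf => card_filter_target_le_four hf
  _ = 4 * C.R.card := by rw [sum_const, smul_eq_mul, mul_comm]
  _ ≤ 4 * C.I.card := Nat.mul_le_mul_left 4 card_image_le

end MaxRainbow

end

theorem stmt_17_general {V : Type*} [DecidableEq V] (G : SimpleGraph V) (n : ℕ)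
    (F : Fin n → Finset (Sym2 V))
    (hedges : ∀ i, ∀ e ∈ F i, e ∈ G.edgeSet)
    (hmatch : ∀ i, ∀ e ∈ F i, ∀ f ∈ F i, e ≠ f → ∀ v, v ∈ e → v ∉ f)
    (hdisjF : ∀ i j, i ≠ j → Disjoint (F i) (F j))
    (I : Finset (Fin n)) (c : Fin n → Sym2 V)
    (hc : ∀ i ∈ I, c i ∈ F i)
    (hdisj : ∀ i ∈ I, ∀ j ∈ I, i ≠ j → ∀ v, v ∈ c i → v ∉ c j)
    (hmax : ∀ (J : Finset (Fin n)) (d : Fin n → Sym2 V),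
      (∀ i ∈ J, d i ∈ F i) →
      (∀ i ∈ J, ∀ j ∈ J, i ≠ j → ∀ v, v ∈ d i → v ∉ d j) →
      J.card ≤ I.card) :
    ∑ e ∈ I.image c, hwDeg F I (I.image c) e ≤ 4 * I.card :=
  MaxRainbow.sum_hwDeg_le (C := {
    n, F, I, c
    loopless := fun i e he => G.not_isDiag_of_mem_edgeSet (hedges i e he)
    isMatching := fun i e he f hf ⟨v, hve, hvf⟩ =>
      by_contra fun hef => hmatch i e he f hf hef v hve hvf
    disjoint := hdisjF
    c_mem := hc
    rainbow := fun i hi j hj ⟨v, hvi, hvj⟩ => by_contra fun hij => hdisj i hi j hj hij v hvi hvj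
    maximal := fun J d hd hJ =>
      hmax J d hd fun i hi j hj hij v hvi hvj => hij (hJ i hi j hj ⟨v, hvi, hvj⟩) })

/-- Let `F₁, …, Fₙ` be pairwise disjoint matchings of size `n` in a
graph, and `R = I.image c` a maximum-size rainbow matching of size `q = |I|`. Then
`Σ_{e ∈ R} |HW(e)| ≤ 4q`, where `HW(e)` is the set of unrepresented matchings `Fᵢ` for
which `e` is half-`Fᵢ`-wasteful. -/
theorem stmt_17 {V : Type*} [DecidableEq V] (G : SimpleGraph V) (n : ℕ)
    (F : Fin n → Finset (Sym2 V))
    (hedges : ∀ i, ∀ e ∈ F i, e ∈ G.edgeSet)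
    (hmatch : ∀ i, ∀ e ∈ F i, ∀ f ∈ F i, e ≠ f → ∀ v, v ∈ e → v ∉ f)
    (hsize : ∀ i, (F i).card = n)
    (hdisjF : ∀ i j, i ≠ j → Disjoint (F i) (F j))
    (I : Finset (Fin n)) (c : Fin n → Sym2 V)
    (hc : ∀ i ∈ I, c i ∈ F i)
    (hdisj : ∀ i ∈ I, ∀ j ∈ I, i ≠ j → ∀ v, v ∈ c i → v ∉ c j)
    (hmax : ∀ (J : Finset (Fin n)) (d : Fin n → Sym2 V),
      (∀ i ∈ J, d i ∈ F i) →
      (∀ i ∈ J, ∀ j ∈ J, i ≠ j → ∀ v, v ∈ d i → v ∉ d j) →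
      J.card ≤ I.card) :
    ∑ e ∈ I.image c, hwDeg F I (I.image c) e ≤ 4 * I.card :=
  stmt_17_general G n F hedges hmatch hdisjF I c hc hdisj hmax
end
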